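/- Let d ≥ 4 and consider 2^d points in convex position identified with ℤ/2^dℤ. Any family of pairwise noncrossing, vertex-disjoint chords (a plane matching) in which every chord has cyclic length belonging to the multiset {2^(d−1)−1, 2^(d−1)−2, 2^(d−1)−4, ..., 2^(d−1)−2^(d−3), 2^(d−2), 2^(d−2)}, with at most two chords of length 2^(d−1)−1, at most two of length 2^(d−1)−2^i for each 1 ≤ i ≤ d−3, and at most three of length 2^(d−2), has at most 2d−4 chords. -/
import Mathlib


/-- `x` lies strictly inside the open cyclic interval from `a` (clockwise) to `b`. -/
def inArc (n : ℕ) (a b x : ZMod n) : Prop :=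
  0 < (x - a).val ∧ (x - a).val < (b - a).val

/-- Two chords on cyclically labelled points in convex position cross. -/
def Crossing (n : ℕ) (e f : ZMod n × ZMod n) : Prop :=
  e.1 ≠ e.2 ∧ f.1 ≠ f.2 ∧ e.1 ≠ f.1 ∧ e.1 ≠ f.2 ∧ e.2 ≠ f.1 ∧ e.2 ≠ f.2 ∧
    (inArc n e.1 e.2 f.1 ↔ ¬ inArc n e.1 e.2 f.2)

/-- Cyclic length of a chord. -/
def cycLen (n : ℕ) (e : ZMod n × ZMod n) : ℕ :=
  min (e.2 - e.1).val (e.1 - e.2).val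

namespace Stmt15Aux

def arcset (n : ℕ) (a : ZMod n) (l : ℕ) : Finset (ZMod n) :=
  (Finset.range (l+1)).image (fun j : ℕ => a + (j : ZMod n))

lemma mem_arcset {n : ℕ} {a x : ZMod n} {l : ℕ} :
    x ∈ arcset n a l ↔ ∃ j, j ≤ l ∧ x = a + (j : ZMod n) := by
  simp only [arcset, Finset.mem_image, Finset.mem_range, Nat.lt_succ_iff]
  constructor
  · rintro ⟨j, hj, rfl⟩; exact ⟨j, hj, rfl⟩
  · rintro ⟨j, hj, rfl⟩; exact ⟨j, hj, rfl⟩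

lemma card_arcset {n : ℕ} [NeZero n] (a : ZMod n) {l : ℕ} (hl : l < n) :
    (arcset n a l).card = l + 1 := by
  rw [arcset, Finset.card_image_of_injOn, Finset.card_range]
  intro i hi j hj hij
  simp only [Finset.mem_coe, Finset.mem_range, Nat.lt_succ_iff] at hi hj
  have h : (i : ZMod n) = (j : ZMod n) := by
    have := hij; exact add_left_cancel this
  have := congrArg ZMod.val h
  rwa [ZMod.val_cast_of_lt (by omega), ZMod.val_cast_of_lt (by omega)] at this

lemma inArc_compl {n : ℕ} [NeZero n] {a b x : ZMod n} (hab : a ≠ b) (hxa : x ≠ a)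
    (hxb : x ≠ b) : (inArc n a b x ↔ ¬ inArc n b a x) := by
  have hn : 0 < n := NeZero.pos n
  set u := (x - a).val with hu
  set v := (b - a).val with hv
  have hun : u < n := ZMod.val_lt _
  have hvn : v < n := ZMod.val_lt _
  have hu0 : u ≠ 0 := fun h => hxa (by
    have : x - a = 0 := (ZMod.val_eq_zero _).mp h
    exact sub_eq_zero.mp this)
  have hv0 : v ≠ 0 := fun h => hab (by
    have : b - a = 0 := (ZMod.val_eq_zero _).mp h
    exact (sub_eq_zero.mp this).symm)
  have huv : u ≠ v := fun h => hxb (by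
    have : x - a = b - a := by
      rw [← ZMod.natCast_zmod_val (x - a), ← ZMod.natCast_zmod_val (b - a), ← hu, ← hv, h]
    exact sub_left_injective this)
  haveI : NeZero (b - a) := ⟨fun h => hab (sub_eq_zero.mp h).symm⟩
  have hab' : (a - b).val = n - v := by
    have h1 : a - b = -(b - a) := by ring
    rw [h1, ZMod.val_neg_of_ne_zero, ← hv]
  have e1 : ((u : ℕ) : ZMod n) = x - a := by rw [hu, ZMod.natCast_zmod_val]
  have e2 : (((n - v : ℕ)) : ZMod n) = a - b := by
    rw [← hab', ZMod.natCast_zmod_val]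
  have hxbv : (x - b).val = (u + (n - v)) % n := by
    have h1 : x - b = ((u + (n - v) : ℕ) : ZMod n) := by
      push_cast [e1, e2]; ring
    rw [h1, ZMod.val_natCast]
  simp only [inArc, ← hu, ← hv, hxbv, hab']
  rcases lt_or_gt_of_ne huv with h | h
  · have hm : (u + (n - v)) % n = u + (n - v) := Nat.mod_eq_of_lt (by omega)
    rw [hm]; omega
  · have hm : (u + (n - v)) % n = u - v := by
      have h1 : (u + (n - v)) % n = (u + (n - v) - n) % n := by
        rw [Nat.mod_eq_sub_mod (by omega)]
      rw [h1, Nat.mod_eq_of_lt (by omega)]; omega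
    rw [hm]; omega

lemma crossing_swap_right {n : ℕ} (e : ZMod n × ZMod n) (p q : ZMod n) :
    Crossing n e (p, q) ↔ Crossing n e (q, p) := by
  unfold Crossing
  constructor <;> rintro ⟨h1, h2, h3, h4, h5, h6, h7⟩ <;>
    exact ⟨h1, h2.symm, h4, h3, h6, h5, by tauto⟩

lemma crossing_swap_left {n : ℕ} [NeZero n] (p q : ZMod n) (f : ZMod n × ZMod n) :
    Crossing n (p, q) f ↔ Crossing n (q, p) f := by
  unfold Crossing
  constructor
  · rintro ⟨h1, h2, h3, h4, h5, h6, h7⟩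
    refine ⟨h1.symm, h2, h5, h6, h3, h4, ?_⟩
    have c1 := inArc_compl (n := n) h1 (Ne.symm h3) (Ne.symm h5)
    have c2 := inArc_compl (n := n) h1 (Ne.symm h4) (Ne.symm h6)
    simp only at c1 c2 h7 ⊢
    tauto
  · rintro ⟨h1, h2, h3, h4, h5, h6, h7⟩
    refine ⟨h1.symm, h2, h5, h6, h3, h4, ?_⟩
    have c1 := inArc_compl (n := n) h1 (Ne.symm h3) (Ne.symm h5)
    have c2 := inArc_compl (n := n) h1 (Ne.symm h4) (Ne.symm h6)
    simp only at c1 c2 h7 ⊢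
    tauto

end Stmt15Aux

namespace Stmt15Aux

lemma exists_base {n : ℕ} [NeZero n] (e : ZMod n × ZMod n) :
    ∃ a : ZMod n, e = (a, a + ((cycLen n e : ℕ) : ZMod n)) ∨
      e = (a + ((cycLen n e : ℕ) : ZMod n), a) := by
  unfold cycLen
  rcases le_total (e.2 - e.1).val (e.1 - e.2).val with h | h
  · refine ⟨e.1, Or.inl ?_⟩
    rw [min_eq_left h, ZMod.natCast_zmod_val]
    exact Prod.ext rfl (by ring)
  · refine ⟨e.2, Or.inr ?_⟩
    rw [min_eq_right h, ZMod.natCast_zmod_val]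
    exact Prod.ext (by ring) rfl

lemma core {n : ℕ} [NeZero n] {a b : ZMod n} {la lb : ℕ}
    (hla0 : 0 < la) (hlb0 : 0 < lb) (hla : 2 * la < n) (hlb : 2 * lb < n)
    (h1 : a ≠ b) (h2 : a ≠ b + (lb : ZMod n)) (h3 : a + (la : ZMod n) ≠ b)
    (h4 : a + (la : ZMod n) ≠ b + (lb : ZMod n))
    (hcr : ¬ Crossing n (a, a + (la : ZMod n)) (b, b + (lb : ZMod n))) :
    Disjoint (arcset n a la) (arcset n b lb) ∨
    (arcset n b lb ⊆ arcset n (a + 1) (la - 2) ∧ lb + 2 ≤ la) ∨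
    (arcset n a la ⊆ arcset n (b + 1) (lb - 2) ∧ la + 2 ≤ lb) := by
  have hn : 0 < n := NeZero.pos n
  have hlan : la < n := by omega
  have hlbn : lb < n := by omega
  have hcast_la : ((la : ZMod n)).val = la := ZMod.val_cast_of_lt hlan
  have hcast_lb : ((lb : ZMod n)).val = lb := ZMod.val_cast_of_lt hlbn
  have hself_e : a ≠ a + (la : ZMod n) := by
    intro h
    have : (la : ZMod n) = 0 := by
      have := h.symm; rwa [add_eq_left] at this
    rw [this, ZMod.val_zero] at hcast_la; omega
  have hself_f : b ≠ b + (lb : ZMod n) := by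
    intro h
    have : (lb : ZMod n) = 0 := by
      have := h.symm; rwa [add_eq_left] at this
    rw [this, ZMod.val_zero] at hcast_lb; omega
  set u := (b - a).val with hu
  set w := (b + (lb : ZMod n) - a).val with hw
  have hun : u < n := ZMod.val_lt _
  have hwn : w < n := ZMod.val_lt _
  have hbu : b = a + (u : ZMod n) := by
    rw [hu, ZMod.natCast_zmod_val]; ring
  have hu0 : u ≠ 0 := fun h => h1 (by
    have : b - a = 0 := (ZMod.val_eq_zero _).mp h
    exact (sub_eq_zero.mp this).symm)
  have hw0 : w ≠ 0 := fun h => h2 (by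
    have : b + (lb : ZMod n) - a = 0 := (ZMod.val_eq_zero _).mp h
    exact (sub_eq_zero.mp this).symm)
  have hula : u ≠ la := by
    intro h
    apply h3
    rw [← h, hbu]
  have hwla : w ≠ la := by
    intro h
    apply h4
    have : b + (lb : ZMod n) = a + ((w : ℕ) : ZMod n) := by
      rw [hw, ZMod.natCast_zmod_val]; ring
    rw [this, h]
  have hwval : w = (u + lb) % n := by
    have h1' : b + (lb : ZMod n) - a = (((u + lb : ℕ)) : ZMod n) := by
      push_cast
      rw [hbu]; ring
    rw [hw, h1', ZMod.val_natCast]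
  -- extract the noncrossing iff
  have hiff : (0 < u ∧ u < la) ↔ (0 < w ∧ w < la) := by
    have hval : ((a + (la : ZMod n)) - a).val = la := by
      rw [add_sub_cancel_left, hcast_la]
    have hnc : ¬ (inArc n a (a + (la : ZMod n)) b ↔
        ¬ inArc n a (a + (la : ZMod n)) (b + (lb : ZMod n))) := by
      intro hx
      exact hcr ⟨hself_e, hself_f, h1, h2, h3, h4, hx⟩
    simp only [inArc, hval, ← hu, ← hw] at hnc
    tauto
  rcases lt_trichotomy u la with hcase | hcase | hcase
  · -- f nested in e
    have hw' : 0 < w ∧ w < la := hiff.mp ⟨by omega, hcase⟩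
    have hnowrap : u + lb < n := by omega
    have hwval' : w = u + lb := by rw [hwval, Nat.mod_eq_of_lt hnowrap]
    refine Or.inr (Or.inl ⟨?_, by omega⟩)
    intro x hx
    obtain ⟨k, hk, rfl⟩ := mem_arcset.mp hx
    refine mem_arcset.mpr ⟨u - 1 + k, by omega, ?_⟩
    rw [hbu]
    have : ((u - 1 + k : ℕ) : ZMod n) = (u : ZMod n) - 1 + (k : ZMod n) := by
      rw [Nat.cast_add, Nat.cast_sub (by omega), Nat.cast_one]
    rw [this]; ring
  · exact absurd hcase hula
  · -- u > la
    have hw' : la < w := by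
      rcases Nat.lt_or_ge la w with h | h
      · exact h
      · exfalso
        have := hiff.mpr ⟨by omega, by omega⟩
        omega
    rcases Nat.lt_or_ge (u + lb) n with hnowrap | hwrap
    · -- disjoint
      have hwval' : w = u + lb := by rw [hwval, Nat.mod_eq_of_lt hnowrap]
      refine Or.inl (Finset.disjoint_left.mpr ?_)
      rintro x hx hx'
      obtain ⟨j, hj, rfl⟩ := mem_arcset.mp hx
      obtain ⟨k, hk, hEq⟩ := mem_arcset.mp hx'
      rw [hbu] at hEq
      have hEq2 : ((j : ℕ) : ZMod n) = ((u + k : ℕ) : ZMod n) := by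
        push_cast
        have := hEq
        rw [add_assoc] at this
        exact add_left_cancel this
      have := congrArg ZMod.val hEq2
      rw [ZMod.val_cast_of_lt (by omega), ZMod.val_cast_of_lt (by omega)] at this
      omega
    · -- e nested in f
      have hwval' : w = u + lb - n := by
        rw [hwval, Nat.mod_eq_sub_mod hwrap, Nat.mod_eq_of_lt (by omega)]
      refine Or.inr (Or.inr ⟨?_, by omega⟩)
      intro x hx
      obtain ⟨j, hj, rfl⟩ := mem_arcset.mp hx
      refine mem_arcset.mpr ⟨n - u - 1 + j, by omega, ?_⟩
      have hab : a = b + ((n - u : ℕ) : ZMod n) := by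
        rw [hbu]
        push_cast [Nat.cast_sub (le_of_lt hun)]
        rw [ZMod.natCast_self]
        ring
      rw [hab]
      have : ((n - u - 1 + j : ℕ) : ZMod n) = ((n - u : ℕ) : ZMod n) - 1 + (j : ZMod n) := by
        rw [Nat.cast_add, Nat.cast_sub (by omega), Nat.cast_one]
      rw [this]; ring

lemma exists_three {α : Type*} [DecidableEq α] {S : Finset α} (h : 3 ≤ S.card) :
    ∃ x ∈ S, ∃ y ∈ S, ∃ z ∈ S, x ≠ y ∧ x ≠ z ∧ y ≠ z := by
  have h1 : 0 < S.card := by omega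
  obtain ⟨x, hx⟩ := Finset.card_pos.mp h1
  have h2 : 0 < (S.erase x).card := by rw [Finset.card_erase_of_mem hx]; omega
  obtain ⟨y, hy⟩ := Finset.card_pos.mp h2
  have h3 : 0 < ((S.erase x).erase y).card := by
    rw [Finset.card_erase_of_mem hy, Finset.card_erase_of_mem hx]; omega
  obtain ⟨z, hz⟩ := Finset.card_pos.mp h3
  have hy' := Finset.mem_erase.mp hy
  have hz' := Finset.mem_erase.mp hz
  have hz'' := Finset.mem_erase.mp hz'.2
  exact ⟨x, hx, y, hy'.2, z, hz''.2, fun h => hy'.1 h.symm, fun h => hz''.1 h.symm,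
    fun h => hz'.1 h.symm⟩

lemma three_disj {n : ℕ} [NeZero n] {S1 S2 S3 : Finset (ZMod n)}
    (h12 : Disjoint S1 S2) (h13 : Disjoint S1 S3) (h23 : Disjoint S2 S3) :
    S1.card + S2.card + S3.card ≤ n := by
  have h1 : Disjoint S1 (S2 ∪ S3) := Finset.disjoint_union_right.mpr ⟨h12, h13⟩
  have hc : (S1 ∪ (S2 ∪ S3)).card = S1.card + S2.card + S3.card := by
    rw [Finset.card_union_of_disjoint h1, Finset.card_union_of_disjoint h23, add_assoc]
  calc S1.card + S2.card + S3.card = (S1 ∪ (S2 ∪ S3)).card := hc.symm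
    _ ≤ Fintype.card (ZMod n) := Finset.card_le_univ _
    _ = n := ZMod.card n

end Stmt15Aux

namespace Stmt15Aux

lemma core' {n : ℕ} [NeZero n] {e f : ZMod n × ZMod n} {a b : ZMod n} {la lb : ℕ}
    (ha : e = (a, a + (la : ZMod n)) ∨ e = (a + (la : ZMod n), a))
    (hb : f = (b, b + (lb : ZMod n)) ∨ f = (b + (lb : ZMod n), b))
    (hla0 : 0 < la) (hlb0 : 0 < lb) (hla : 2 * la < n) (hlb : 2 * lb < n)
    (hd : e.1 ≠ f.1 ∧ e.1 ≠ f.2 ∧ e.2 ≠ f.1 ∧ e.2 ≠ f.2)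
    (hcr : ¬ Crossing n e f) :
    Disjoint (arcset n a la) (arcset n b lb) ∨
    (arcset n b lb ⊆ arcset n (a + 1) (la - 2) ∧ lb + 2 ≤ la) ∨
    (arcset n a la ⊆ arcset n (b + 1) (lb - 2) ∧ la + 2 ≤ lb) := by
  obtain ⟨d1, d2, d3, d4⟩ := hd
  rcases ha with rfl | rfl <;> rcases hb with rfl | rfl
  · exact core hla0 hlb0 hla hlb d1 d2 d3 d4 hcr
  · exact core hla0 hlb0 hla hlb d2 d1 d4 d3
      (fun hx => hcr ((crossing_swap_right _ _ _).mp hx))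
  · exact core hla0 hlb0 hla hlb d3 d4 d1 d2
      (fun hx => hcr ((crossing_swap_left _ _ _).mp hx))
  · exact core hla0 hlb0 hla hlb d4 d3 d2 d1
      (fun hx => hcr ((crossing_swap_left _ _ _).mp ((crossing_swap_right _ _ _).mp hx)))

end Stmt15Aux


open Stmt15Aux

/-- On `2^d` points in convex position (`d ≥ 4`), a plane matching in which every chord
has cyclic length `2^(d-1) - 1`, `2^(d-1) - 2^i` for some `1 ≤ i ≤ d-3`, or `2^(d-2)`,
with at most two chords of length `2^(d-1) - 1`, at most two of each length
`2^(d-1) - 2^i` (`1 ≤ i ≤ d-3`), and at most three of length `2^(d-2)`, has at most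
`2d - 4` chords. -/
theorem stmt15 (d : ℕ) (hd : 4 ≤ d)
    (M : Finset (ZMod (2 ^ d) × ZMod (2 ^ d)))
    (hdisj : ∀ e ∈ M, ∀ f ∈ M, e ≠ f →
      e.1 ≠ f.1 ∧ e.1 ≠ f.2 ∧ e.2 ≠ f.1 ∧ e.2 ≠ f.2)
    (hcross : ∀ e ∈ M, ∀ f ∈ M, e ≠ f → ¬ Crossing (2 ^ d) e f)
    (hlen : ∀ e ∈ M, cycLen (2 ^ d) e = 2 ^ (d - 1) - 1 ∨
      (∃ i, 1 ≤ i ∧ i ≤ d - 3 ∧ cycLen (2 ^ d) e = 2 ^ (d - 1) - 2 ^ i) ∨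
      cycLen (2 ^ d) e = 2 ^ (d - 2))
    (hcnt1 : (M.filter (fun e => cycLen (2 ^ d) e = 2 ^ (d - 1) - 1)).card ≤ 2)
    (hcnt2 : ∀ i, 1 ≤ i → i ≤ d - 3 →
      (M.filter (fun e => cycLen (2 ^ d) e = 2 ^ (d - 1) - 2 ^ i)).card ≤ 2)
    (hcnt3 : (M.filter (fun e => cycLen (2 ^ d) e = 2 ^ (d - 2))).card ≤ 3) :
    M.card ≤ 2 * d - 4 := by
  classical
  haveI : NeZero (2 ^ d) := ⟨by positivity⟩
  have hnL : (2:ℕ) ^ d = 2 * 2 ^ (d - 1) := by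
    rw [← pow_succ']; congr 1; omega
  have hLQ : (2:ℕ) ^ (d - 1) = 2 * 2 ^ (d - 2) := by
    rw [← pow_succ']; congr 1; omega
  have hL8 : 8 ≤ (2:ℕ) ^ (d - 1) := by
    have : (2:ℕ) ^ 3 ≤ 2 ^ (d - 1) := Nat.pow_le_pow_right (by norm_num) (by omega)
    norm_num at this; exact this
  -- basic facts about lengths
  have hlen' : ∀ e ∈ M, 0 < cycLen (2 ^ d) e ∧ 2 * cycLen (2 ^ d) e < 2 ^ d := by
    intro e he
    rcases hlen e he with h | ⟨i, hi1, hi2, h⟩ | h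
    · omega
    · have hp1 : (2:ℕ) ^ i ≤ 2 ^ (d - 3) := Nat.pow_le_pow_right (by norm_num) hi2
      have hp2 : (2:ℕ) ^ (d - 2) = 2 * 2 ^ (d - 3) := by
        rw [← pow_succ']; congr 1; omega
      have hp3 : 1 ≤ (2:ℕ) ^ i := Nat.one_le_two_pow
      omega
    · omega
  -- pairwise trichotomy instantiated
  have tri : ∀ e ∈ M, ∀ f ∈ M, e ≠ f → ∀ a b : ZMod (2 ^ d),
      (e = (a, a + ((cycLen (2 ^ d) e : ℕ) : ZMod (2 ^ d))) ∨
        e = (a + ((cycLen (2 ^ d) e : ℕ) : ZMod (2 ^ d)), a)) →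
      (f = (b, b + ((cycLen (2 ^ d) f : ℕ) : ZMod (2 ^ d))) ∨
        f = (b + ((cycLen (2 ^ d) f : ℕ) : ZMod (2 ^ d)), b)) →
      Disjoint (arcset (2 ^ d) a (cycLen (2 ^ d) e)) (arcset (2 ^ d) b (cycLen (2 ^ d) f)) ∨
      (arcset (2 ^ d) b (cycLen (2 ^ d) f) ⊆ arcset (2 ^ d) (a + 1) (cycLen (2 ^ d) e - 2) ∧
        cycLen (2 ^ d) f + 2 ≤ cycLen (2 ^ d) e) ∨
      (arcset (2 ^ d) a (cycLen (2 ^ d) e) ⊆ arcset (2 ^ d) (b + 1) (cycLen (2 ^ d) f - 2) ∧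
        cycLen (2 ^ d) e + 2 ≤ cycLen (2 ^ d) f) := by
    intro e he f hf hef a b ha hb
    obtain ⟨he1, he2⟩ := hlen' e he
    obtain ⟨hf1, hf2⟩ := hlen' f hf
    exact core' ha hb he1 hf1 he2 hf2 (hdisj e he f hf hef) (hcross e he f hf hef)
  -- Key 1 : at most two "very long" chords
  have key1 : (M.filter (fun e => cycLen (2 ^ d) e = 2 ^ (d - 1) - 1 ∨
      cycLen (2 ^ d) e = 2 ^ (d - 1) - 2)).card ≤ 2 := by
    by_contra hA
    push_neg at hA
    obtain ⟨e, he, f, hf, g, hg, hef, heg, hfg⟩ := exists_three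
      (S := M.filter (fun e => cycLen (2 ^ d) e = 2 ^ (d - 1) - 1 ∨
        cycLen (2 ^ d) e = 2 ^ (d - 1) - 2)) (by omega)
    rw [Finset.mem_filter] at he hf hg
    obtain ⟨ae, hae⟩ := exists_base (n := 2 ^ d) e
    obtain ⟨af, haf⟩ := exists_base (n := 2 ^ d) f
    obtain ⟨ag, hag⟩ := exists_base (n := 2 ^ d) g
    have t1 := tri e he.1 f hf.1 hef ae af hae haf
    have t2 := tri e he.1 g hg.1 heg ae ag hae hag
    have t3 := tri f hf.1 g hg.1 hfg af ag haf hag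
    have hle : 2 ^ (d - 1) - 2 ≤ cycLen (2 ^ d) e ∧ cycLen (2 ^ d) e ≤ 2 ^ (d - 1) - 1 := by
      rcases he.2 with h | h <;> omega
    have hlf : 2 ^ (d - 1) - 2 ≤ cycLen (2 ^ d) f ∧ cycLen (2 ^ d) f ≤ 2 ^ (d - 1) - 1 := by
      rcases hf.2 with h | h <;> omega
    have hlg : 2 ^ (d - 1) - 2 ≤ cycLen (2 ^ d) g ∧ cycLen (2 ^ d) g ≤ 2 ^ (d - 1) - 1 := by
      rcases hg.2 with h | h <;> omega
    have D1 : Disjoint (arcset (2 ^ d) ae (cycLen (2 ^ d) e))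
        (arcset (2 ^ d) af (cycLen (2 ^ d) f)) := by
      rcases t1 with t | ⟨_, t⟩ | ⟨_, t⟩
      · exact t
      · omega
      · omega
    have D2 : Disjoint (arcset (2 ^ d) ae (cycLen (2 ^ d) e))
        (arcset (2 ^ d) ag (cycLen (2 ^ d) g)) := by
      rcases t2 with t | ⟨_, t⟩ | ⟨_, t⟩
      · exact t
      · omega
      · omega
    have D3 : Disjoint (arcset (2 ^ d) af (cycLen (2 ^ d) f))
        (arcset (2 ^ d) ag (cycLen (2 ^ d) g)) := by
      rcases t3 with t | ⟨_, t⟩ | ⟨_, t⟩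
      · exact t
      · omega
      · omega
    have c1 := card_arcset (n := 2 ^ d) ae (l := cycLen (2 ^ d) e) (by have := (hlen' e he.1).2; omega)
    have c2 := card_arcset (n := 2 ^ d) af (l := cycLen (2 ^ d) f) (by have := (hlen' f hf.1).2; omega)
    have c3 := card_arcset (n := 2 ^ d) ag (l := cycLen (2 ^ d) g) (by have := (hlen' g hg.1).2; omega)
    have hbig := three_disj D1 D2 D3
    rw [c1, c2, c3] at hbig
    omega
  -- Key 2 : a very long chord forces at most two short chords
  have key2 : ∀ e ∈ M, (cycLen (2 ^ d) e = 2 ^ (d - 1) - 1 ∨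
      cycLen (2 ^ d) e = 2 ^ (d - 1) - 2) →
      (M.filter (fun f => cycLen (2 ^ d) f = 2 ^ (d - 2))).card ≤ 2 := by
    intro e heM hev
    by_contra hC
    push_neg at hC
    obtain ⟨s1, h1, s2, h2, s3, h3, h12, h13, h23⟩ := exists_three
      (S := M.filter (fun f => cycLen (2 ^ d) f = 2 ^ (d - 2))) (by omega)
    rw [Finset.mem_filter] at h1 h2 h3
    have hes : ∀ s : ZMod (2 ^ d) × ZMod (2 ^ d), cycLen (2 ^ d) s = 2 ^ (d - 2) → e ≠ s := by
      intro s hs hEq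
      rw [← hEq] at hs
      omega
    obtain ⟨ae, hae⟩ := exists_base (n := 2 ^ d) e
    obtain ⟨a1, ha1⟩ := exists_base (n := 2 ^ d) s1
    obtain ⟨a2, ha2⟩ := exists_base (n := 2 ^ d) s2
    obtain ⟨a3, ha3⟩ := exists_base (n := 2 ^ d) s3
    have te1 := tri e heM s1 h1.1 (hes s1 h1.2) ae a1 hae ha1
    have te2 := tri e heM s2 h2.1 (hes s2 h2.2) ae a2 hae ha2
    have te3 := tri e heM s3 h3.1 (hes s3 h3.2) ae a3 hae ha3
    have t12 := tri s1 h1.1 s2 h2.1 h12 a1 a2 ha1 ha2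
    have t13 := tri s1 h1.1 s3 h3.1 h13 a1 a3 ha1 ha3
    have t23 := tri s2 h2.1 s3 h3.1 h23 a2 a3 ha2 ha3
    -- short arcs pairwise disjoint
    have D12 : Disjoint (arcset (2 ^ d) a1 (cycLen (2 ^ d) s1))
        (arcset (2 ^ d) a2 (cycLen (2 ^ d) s2)) := by
      rcases t12 with t | ⟨_, t⟩ | ⟨_, t⟩
      · exact t
      · rw [h1.2, h2.2] at t; omega
      · rw [h1.2, h2.2] at t; omega
    have D13 : Disjoint (arcset (2 ^ d) a1 (cycLen (2 ^ d) s1))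
        (arcset (2 ^ d) a3 (cycLen (2 ^ d) s3)) := by
      rcases t13 with t | ⟨_, t⟩ | ⟨_, t⟩
      · exact t
      · rw [h1.2, h3.2] at t; omega
      · rw [h1.2, h3.2] at t; omega
    have D23 : Disjoint (arcset (2 ^ d) a2 (cycLen (2 ^ d) s2))
        (arcset (2 ^ d) a3 (cycLen (2 ^ d) s3)) := by
      rcases t23 with t | ⟨_, t⟩ | ⟨_, t⟩
      · exact t
      · rw [h2.2, h3.2] at t; omega
      · rw [h2.2, h3.2] at t; omega
    have hle : 2 ^ (d - 1) - 2 ≤ cycLen (2 ^ d) e ∧ cycLen (2 ^ d) e ≤ 2 ^ (d - 1) - 1 := by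
      rcases hev with h | h <;> omega
    -- rule out e nested in a short chord
    have te1' : Disjoint (arcset (2 ^ d) ae (cycLen (2 ^ d) e))
        (arcset (2 ^ d) a1 (cycLen (2 ^ d) s1)) ∨
        arcset (2 ^ d) a1 (cycLen (2 ^ d) s1) ⊆
          arcset (2 ^ d) (ae + 1) (cycLen (2 ^ d) e - 2) := by
      rcases te1 with t | ⟨t, _⟩ | ⟨_, t⟩
      · exact Or.inl t
      · exact Or.inr t
      · rw [h1.2] at t; omega
    have te2' : Disjoint (arcset (2 ^ d) ae (cycLen (2 ^ d) e))
        (arcset (2 ^ d) a2 (cycLen (2 ^ d) s2)) ∨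
        arcset (2 ^ d) a2 (cycLen (2 ^ d) s2) ⊆
          arcset (2 ^ d) (ae + 1) (cycLen (2 ^ d) e - 2) := by
      rcases te2 with t | ⟨t, _⟩ | ⟨_, t⟩
      · exact Or.inl t
      · exact Or.inr t
      · rw [h2.2] at t; omega
    have te3' : Disjoint (arcset (2 ^ d) ae (cycLen (2 ^ d) e))
        (arcset (2 ^ d) a3 (cycLen (2 ^ d) s3)) ∨
        arcset (2 ^ d) a3 (cycLen (2 ^ d) s3) ⊆
          arcset (2 ^ d) (ae + 1) (cycLen (2 ^ d) e - 2) := by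
      rcases te3 with t | ⟨t, _⟩ | ⟨_, t⟩
      · exact Or.inl t
      · exact Or.inr t
      · rw [h3.2] at t; omega
    have ce := card_arcset (n := 2 ^ d) ae (l := cycLen (2 ^ d) e)
      (by have := (hlen' e heM).2; omega)
    have c1 := card_arcset (n := 2 ^ d) a1 (l := cycLen (2 ^ d) s1)
      (by have := (hlen' s1 h1.1).2; omega)
    have c2 := card_arcset (n := 2 ^ d) a2 (l := cycLen (2 ^ d) s2)
      (by have := (hlen' s2 h2.1).2; omega)
    have c3 := card_arcset (n := 2 ^ d) a3 (l := cycLen (2 ^ d) s3)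
      (by have := (hlen' s3 h3.1).2; omega)
    have cin := card_arcset (n := 2 ^ d) (ae + 1) (l := cycLen (2 ^ d) e - 2)
      (by have := (hlen' e heM).2; omega)
    -- two shorts disjoint from e gives a contradiction
    have twoE : ∀ (x y : ZMod (2 ^ d)) (lx ly : ℕ),
        Disjoint (arcset (2 ^ d) ae (cycLen (2 ^ d) e)) (arcset (2 ^ d) x lx) →
        Disjoint (arcset (2 ^ d) ae (cycLen (2 ^ d) e)) (arcset (2 ^ d) y ly) →
        Disjoint (arcset (2 ^ d) x lx) (arcset (2 ^ d) y ly) →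
        (arcset (2 ^ d) x lx).card = lx + 1 → (arcset (2 ^ d) y ly).card = ly + 1 →
        lx = 2 ^ (d - 2) → ly = 2 ^ (d - 2) → False := by
      intro x y lx ly hx hy hxy cx cy hlx hly
      have hbig := three_disj hx hy hxy
      rw [ce, cx, cy] at hbig
      omega
    -- two shorts nested in e gives a contradiction
    have twoN : ∀ (x y : ZMod (2 ^ d)) (lx ly : ℕ),
        arcset (2 ^ d) x lx ⊆ arcset (2 ^ d) (ae + 1) (cycLen (2 ^ d) e - 2) →
        arcset (2 ^ d) y ly ⊆ arcset (2 ^ d) (ae + 1) (cycLen (2 ^ d) e - 2) →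
        Disjoint (arcset (2 ^ d) x lx) (arcset (2 ^ d) y ly) →
        (arcset (2 ^ d) x lx).card = lx + 1 → (arcset (2 ^ d) y ly).card = ly + 1 →
        lx = 2 ^ (d - 2) → ly = 2 ^ (d - 2) → False := by
      intro x y lx ly hx hy hxy cx cy hlx hly
      have hsub : arcset (2 ^ d) x lx ∪ arcset (2 ^ d) y ly ⊆
          arcset (2 ^ d) (ae + 1) (cycLen (2 ^ d) e - 2) := Finset.union_subset hx hy
      have hcard := Finset.card_le_card hsub
      rw [Finset.card_union_of_disjoint hxy, cx, cy, cin] at hcard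
      omega
    rcases te1' with E1 | N1
    · rcases te2' with E2 | N2
      · exact twoE a1 a2 _ _ E1 E2 D12 c1 c2 h1.2 h2.2
      · rcases te3' with E3 | N3
        · exact twoE a1 a3 _ _ E1 E3 D13 c1 c3 h1.2 h3.2
        · exact twoN a2 a3 _ _ N2 N3 D23 c2 c3 h2.2 h3.2
    · rcases te2' with E2 | N2
      · rcases te3' with E3 | N3
        · exact twoE a2 a3 _ _ E2 E3 D23 c2 c3 h2.2 h3.2
        · exact twoN a1 a3 _ _ N1 N3 D13 c1 c3 h1.2 h3.2
      · exact twoN a1 a2 _ _ N1 N2 D12 c1 c2 h1.2 h2.2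
  -- final counting
  set A := M.filter (fun e => cycLen (2 ^ d) e = 2 ^ (d - 1) - 1 ∨
      cycLen (2 ^ d) e = 2 ^ (d - 1) - 2) with hAdef
  set C := M.filter (fun e => cycLen (2 ^ d) e = 2 ^ (d - 2)) with hCdef
  set B := (Finset.Icc 2 (d - 3)).biUnion
      (fun i => M.filter (fun e => cycLen (2 ^ d) e = 2 ^ (d - 1) - 2 ^ i)) with hBdef
  have hsub : M ⊆ A ∪ B ∪ C := by
    intro e he
    simp only [hAdef, hBdef, hCdef, Finset.mem_union, Finset.mem_filter, Finset.mem_biUnion,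
      Finset.mem_Icc]
    rcases hlen e he with h | ⟨i, hi1, hi2, h⟩ | h
    · exact Or.inl (Or.inl ⟨he, Or.inl h⟩)
    · rcases eq_or_lt_of_le hi1 with hi | hi
      · refine Or.inl (Or.inl ⟨he, Or.inr ?_⟩)
        rw [← hi] at h
        simpa using h
      · exact Or.inl (Or.inr ⟨i, ⟨hi, hi2⟩, he, h⟩)
    · exact Or.inr ⟨he, h⟩
  have hBcard : B.card ≤ 2 * (d - 4) := by
    calc B.card ≤ ∑ i ∈ Finset.Icc 2 (d - 3),
        (M.filter (fun e => cycLen (2 ^ d) e = 2 ^ (d - 1) - 2 ^ i)).card :=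
          Finset.card_biUnion_le
      _ ≤ ∑ _i ∈ Finset.Icc 2 (d - 3), 2 := Finset.sum_le_sum (fun i hi => by
          rw [Finset.mem_Icc] at hi
          exact hcnt2 i (by omega) hi.2)
      _ = (Finset.Icc 2 (d - 3)).card * 2 := by rw [Finset.sum_const, smul_eq_mul]
      _ = 2 * (d - 4) := by rw [Nat.card_Icc]; omega
  have hM : M.card ≤ A.card + B.card + C.card := by
    calc M.card ≤ (A ∪ B ∪ C).card := Finset.card_le_card hsub
      _ ≤ (A ∪ B).card + C.card := Finset.card_union_le _ _
      _ ≤ A.card + B.card + C.card := by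
          have := Finset.card_union_le A B
          omega
  have hCc3 : C.card ≤ 3 := hcnt3
  rcases Finset.eq_empty_or_nonempty A with hAe | hAne
  · have hA0 : A.card = 0 := by rw [hAe]; rfl
    omega
  · obtain ⟨e, he⟩ := hAne
    rw [hAdef, Finset.mem_filter] at he
    have hCc := key2 e he.1 he.2
    have hAc : A.card ≤ 2 := key1
    omega
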